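/- arXiv:math/0209351 — 8 statements merged into one kernel-verified Lean document; each statement's English description precedes it below -/
import Mathlib

section
/- For every prime p, both sets { j ∈ ℕ : j ≥ 3 and p ∈ Π(j-2) } and { j ∈ ℕ : j ≥ 3 and p ∉ Π(j-2) } are infinite. -/
/-- `p` does not divide `C(p-1, r)` for `r ≤ p-1`. -/
lemma not_dvd_choose_pred (p : ℕ) (hp : p.Prime) {r : ℕ} (hr : r ≤ p - 1) :
    ¬ p ∣ Nat.choose (p - 1) r := by
  intro h
  have key : Nat.choose (p - 1) r * r.factorial * (p - 1 - r).factorial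
      = (p - 1).factorial := Nat.choose_mul_factorial_mul_factorial hr
  have hpd : p ∣ (p - 1).factorial := key ▸ (h.mul_right _).mul_right _
  have h2 := hp.two_le
  have := (Nat.Prime.dvd_factorial hp).mp hpd
  omega

/-- `p` does not divide `C(p^m - 1, k)` for `k ≤ p^m - 1`. -/
lemma not_dvd_choose_pow_pred (p : ℕ) (hp : p.Prime) :
    ∀ m k : ℕ, k ≤ p ^ m - 1 → ¬ p ∣ Nat.choose (p ^ m - 1) k := by
  haveI : Fact p.Prime := ⟨hp⟩
  intro m
  induction m with
  | zero =>
    intro k hk h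
    simp only [pow_zero] at hk
    interval_cases k
    simp at h
    have := hp.two_le
    omega
  | succ m ih =>
    intro k hk h
    have hp2 : 2 ≤ p := hp.two_le
    have hpow : 1 ≤ p ^ m := Nat.one_le_pow _ _ hp.pos
    have hple : p ≤ p * p ^ m := Nat.le_mul_of_pos_right p hpow
    have hdecomp : p * (p ^ m - 1) + (p - 1) = p ^ (m + 1) - 1 := by
      rw [pow_succ, mul_comm (p ^ m) p, Nat.mul_sub, mul_one]
      omega
    have hlucas := Choose.choose_modEq_choose_mod_mul_choose_div_nat
      (p := p) (n := p ^ (m + 1) - 1) (k := k)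
    have hmod : (p ^ (m + 1) - 1) % p = p - 1 := by
      rw [← hdecomp, Nat.mul_add_mod]
      exact Nat.mod_eq_of_lt (by omega)
    have hdiv : (p ^ (m + 1) - 1) / p = p ^ m - 1 := by
      rw [← hdecomp, Nat.mul_add_div hp.pos, Nat.div_eq_of_lt (by omega)]
      omega
    rw [hmod, hdiv] at hlucas
    have hdvd : p ∣ Nat.choose (p - 1) (k % p) * Nat.choose (p ^ m - 1) (k / p) :=
      Nat.modEq_zero_iff_dvd.mp (hlucas.symm.trans (Nat.modEq_zero_iff_dvd.mpr h))
    rcases (Nat.Prime.dvd_mul hp).mp hdvd with h1 | h2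
    · exact not_dvd_choose_pred p hp
        (by have := Nat.mod_lt k hp.pos; omega : k % p ≤ p - 1) h1
    · refine ih (k / p) ?_ h2
      have : k / p < p ^ m := by
        rw [Nat.div_lt_iff_lt_mul hp.pos]
        have : p ^ (m + 1) = p ^ m * p := pow_succ p m
        omega
      omega

/-- For every prime `p`, both the set of `j ≥ 3` with `p ∈ Π(j-2)` and the set of
`j ≥ 3` with `p ∉ Π(j-2)` are infinite, where `Π(n)` is the set of primes dividing
some binomial coefficient `C(n, i)` with `0 ≤ i ≤ n`. -/
theorem sets_with_prime_in_Pi_infinite (p : ℕ) (hp : p.Prime) :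
    {j : ℕ | 3 ≤ j ∧ ∃ i ≤ j - 2, p ∣ Nat.choose (j - 2) i}.Infinite ∧
    {j : ℕ | 3 ≤ j ∧ ¬ ∃ i ≤ j - 2, p ∣ Nat.choose (j - 2) i}.Infinite := by
  have hp2 : 2 ≤ p := hp.two_le
  constructor
  · apply Set.infinite_of_injective_forall_mem (f := fun m : ℕ => p ^ (m + 1) + 2)
    · intro a b hab
      simp only at hab
      have := Nat.pow_right_injective hp2 (by omega : p ^ (a + 1) = p ^ (b + 1))
      omega
    · intro m
      have hpow : 1 ≤ p ^ (m + 1) := Nat.one_le_pow _ _ hp.pos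
      refine ⟨by omega, 1, ?_, ?_⟩
      · omega
      · have : p ^ (m + 1) + 2 - 2 = p ^ (m + 1) := by omega
        rw [this, Nat.choose_one_right]
        exact dvd_pow_self p (by omega)
  · apply Set.infinite_of_injective_forall_mem (f := fun m : ℕ => p ^ (m + 1) + 1)
    · intro a b hab
      simp only at hab
      have := Nat.pow_right_injective hp2 (by omega : p ^ (a + 1) = p ^ (b + 1))
      omega
    · intro m
      have hpow : 2 ≤ p ^ (m + 1) := by
        calc 2 ≤ p := hp2
        _ ≤ p ^ (m + 1) := Nat.le_self_pow (by omega) p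
      refine ⟨by omega, ?_⟩
      rintro ⟨i, hi, hdvd⟩
      have heq : p ^ (m + 1) + 1 - 2 = p ^ (m + 1) - 1 := by omega
      rw [heq] at hdvd hi
      exact not_dvd_choose_pow_pred p hp (m + 1) i hi hdvd
end

section
/- Let k, s ∈ ℕ with s ≥ 1 and i ∈ ℕ. Let Ω be the s × s matrix whose (a, b) entry (1 ≤ a, b ≤ s) is the binomial coefficient C(k, i + b - a), with the convention that C(ξ, η) = 0 if η < 0 or η > ξ. Then det Ω = ∏_{j=0}^{s-1} C(k+s-1-j, i) / C(i+j, i). -/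
/-!
Multiplying `Ω` on the left by the unitriangular Pascal matrix `(C(a, r))` turns it, by
Vandermonde's convolution, into `(C(k + a, i + b))`. Since
`C(n, i + b) = C(n, i) · i! / (i + b)! · (n - i)(n - i - 1)⋯(n - i - b + 1)` and the falling
factorials are monic of degree `b`, that determinant is `∏ₐ C(k + a, i) · i! / (i + a)!` times the
Vandermonde determinant of `k, k + 1, …, k + s - 1`, which is `∏ₐ a!`.
-/

open Finset Matrix Polynomial
open scoped Nat

def pascalMatrix (R : Type*) [CommRing R] (s : ℕ) : Matrix (Fin s) (Fin s) R :=
  of fun a r => ((a : ℕ).choose r : R)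

lemma det_pascalMatrix (R : Type*) [CommRing R] (s : ℕ) : (pascalMatrix R s).det = 1 := by
  rw [det_of_isLowerTriangular _ fun a r (h : a < r) => by
    simp [pascalMatrix, Nat.choose_eq_zero_of_lt (Fin.lt_def.mp h)]]
  simp [pascalMatrix]

lemma choose_add_eq_sum_fin {a s : ℕ} (ha : a < s) (k m : ℕ) :
    (a + k).choose m = ∑ r : Fin s, a.choose r * if (r : ℕ) ≤ m then k.choose (m - r) else 0 := by
  simp only [mul_ite, mul_zero]
  rw [Nat.add_choose_eq,
    Nat.sum_antidiagonal_eq_sum_range_succ (fun r t => a.choose r * k.choose t),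
    Fin.sum_univ_eq_sum_range (fun r => if r ≤ m then a.choose r * k.choose (m - r) else 0),
    ← sum_filter]
  refine (sum_subset (fun r => by simp only [mem_filter, mem_range]; omega) fun r hr hrs => ?_).symm
  simp only [mem_range, mem_filter] at hr hrs
  rw [Nat.choose_eq_zero_of_lt (by omega), zero_mul]

lemma pascalMatrix_mul_of_choose (R : Type*) [CommRing R] {s : ℕ} (k : ℕ) (c : Fin s → ℕ) :
    pascalMatrix R s *
        of (fun (r b : Fin s) => if (r : ℕ) ≤ c b then (k.choose (c b - r) : R) else 0) =
      of fun (a b : Fin s) => (((a : ℕ) + k).choose (c b) : R) := by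
  ext a b
  simp only [mul_apply, pascalMatrix, of_apply, choose_add_eq_sum_fin a.isLt, Nat.cast_sum,
    Nat.cast_mul, Nat.cast_ite, Nat.cast_zero]

lemma cast_choose_add_eq (n i b : ℕ) :
    (n.choose (i + b) : ℚ) =
      (n.choose i : ℚ) * (i ! / (i + b)!) * (descPochhammer ℚ b).eval ((n : ℚ) - i) := by
  rw [Nat.cast_choose_eq_descPochhammer_div, Nat.cast_choose_eq_descPochhammer_div,
    ← descPochhammer_mul, eval_mul, eval_comp]
  simp only [eval_sub, eval_X, eval_natCast]
  field_simp

lemma det_of_choose_add {s : ℕ} (n : Fin s → ℕ) (i : ℕ) :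
    (of fun a b : Fin s => ((n a).choose (i + b) : ℚ)).det =
      (∏ a, ((n a).choose i : ℚ)) * (∏ b : Fin s, (i ! / (i + b)! : ℚ)) *
        (vandermonde fun a => (n a : ℚ)).det := by
  have hD := det_eval_matrixOfPolynomials_eq_det_vandermonde (fun a => (n a : ℚ) - i)
    (fun b => descPochhammer ℚ b) (fun b => descPochhammer_natDegree ℚ b)
    (fun b => monic_descPochhammer ℚ b)
  rw [det_vandermonde_sub] at hD
  rw [hD, mul_assoc, ← det_mul_row, ← det_mul_column]
  simp only [of_apply, cast_choose_add_eq, mul_assoc]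

lemma det_vandermonde_natCast_add (s k : ℕ) :
    (vandermonde fun a : Fin s => (((a : ℕ) + k : ℕ) : ℚ)).det = ∏ a : Fin s, ((a : ℕ)! : ℚ) := by
  cases s with
  | zero => simp
  | succ m =>
    push_cast
    rw [det_vandermonde_add, det_vandermonde_id_eq_superFactorial, ← Nat.prod_range_succ_factorial,
      Fin.prod_univ_eq_prod_range (fun a => (a ! : ℚ)), Nat.cast_prod]

lemma factorial_div_factorial_add_mul_factorial (i b : ℕ) :
    (i ! / (i + b)! : ℚ) * b ! = ((i + b).choose i : ℚ)⁻¹ := by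
  rw [Nat.cast_choose ℚ (Nat.le_add_right i b), Nat.add_sub_cancel_left]
  field_simp

theorem vanZeipel_det_general (k s i : ℕ)
    (Ω : Matrix (Fin s) (Fin s) ℚ)
    (hΩ : ∀ a b : Fin s, Ω a b =
      if (a : ℕ) ≤ i + b then (Nat.choose k (i + b - a) : ℚ) else 0) :
    Ω.det = ∏ j ∈ Finset.range s,
      (Nat.choose (k + s - 1 - j) i : ℚ) / (Nat.choose (i + j) i : ℚ) := by
  have hΩ' : Ω = of fun r b : Fin s => if (r : ℕ) ≤ i + b then (k.choose (i + b - r) : ℚ) else 0 :=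
    ext hΩ
  have hreflect : ∏ j ∈ range s, ((k + s - 1 - j).choose i : ℚ) =
      ∏ j ∈ range s, ((j + k).choose i : ℚ) := by
    rw [← prod_range_reflect (fun j => ((j + k).choose i : ℚ))]
    exact prod_congr rfl fun j hj => by rw [mem_range] at hj; congr 2; omega
  rw [← one_mul Ω.det, ← det_pascalMatrix ℚ s, ← det_mul, hΩ', pascalMatrix_mul_of_choose,
    det_of_choose_add, det_vandermonde_natCast_add, mul_assoc, ← prod_mul_distrib,
    prod_div_distrib, hreflect, div_eq_mul_inv, ← prod_inv_distrib]
  simp only [factorial_div_factorial_add_mul_factorial]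
  rw [Fin.prod_univ_eq_prod_range (fun a => ((a + k).choose i : ℚ)),
    Fin.prod_univ_eq_prod_range (fun b => ((i + b).choose i : ℚ)⁻¹)]

/-- van Zeipel's determinant: for `s ≥ 1`, the `s × s` Toeplitz matrix `Ω` with
`(a,b)` entry `C(k, i + b - a)` (zero when `i + b < a`; the convention `C(ξ,η) = 0`
for `η > ξ` is automatic for `Nat.choose`) has
`det Ω = ∏_{j=0}^{s-1} C(k+s-1-j, i) / C(i+j, i)` (computed in `ℚ`). -/
theorem vanZeipel_det (k s i : ℕ) (hs : 1 ≤ s)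
    (Ω : Matrix (Fin s) (Fin s) ℚ)
    (hΩ : ∀ a b : Fin s, Ω a b =
      if (a : ℕ) ≤ i + b then (Nat.choose k (i + b - a) : ℚ) else 0) :
    Ω.det = ∏ j ∈ Finset.range s,
      (Nat.choose (k + s - 1 - j) i : ℚ) / (Nat.choose (i + j) i : ℚ) :=
  vanZeipel_det_general k s i Ω hΩ
end

section
/- Let k, s ∈ ℕ with s ≥ 1 and i ∈ ℕ. Let Ω be the s × s matrix with (a, b) entry C(k, i + b - a) (convention C(ξ,η)=0 for η<0 or η>ξ). Then det Ω = (∏_{j=0}^{s-1} C(k+s-1, i+j)) / (∏_{j=0}^{s-1} C(k+s-1, j)). -/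
/-!
Multiplying row `a` of `Ω` by `(i+s-1-a)! (k-i+a)! / k!` turns the entry `C(k, i+b-a)` into
`p_b(a)`, where `p_b(x) = (i+s-1-x)^{\underline{s-1-b}} (k-i+x)^{\underline{b}}` is a product of
falling factorials of total degree `s-1`; the falling factorials also vanish exactly where the
binomial coefficient does. As `[p_b(x_a)]` is a Vandermonde matrix times the coefficient matrix of
the `p_b`, its determinant does not change when all nodes are shifted from `a` to `a+i`, and then
the matrix is upper triangular: `p_b(a+i) = 0` for `b < a`. The diagonal `p_a(a+i) =
(s-1-a)! (k+a)^{\underline a}` gives the quotient of binomial coefficients. If `i > k`, the first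
row of `Ω` vanishes.
-/

open Finset Polynomial Matrix
open scoped Nat

namespace Matrix

variable {R : Type*} [CommRing R] {n : ℕ}

theorem of_eval_eq_vandermonde_mul (p : Fin n → R[X]) (hp : ∀ j, (p j).natDegree < n)
    (v : Fin n → R) :
    of (fun i j => (p j).eval (v i)) = vandermonde v * of (fun (t j : Fin n) => (p j).coeff t) := by
  ext i j
  rw [mul_apply, of_apply, eval_eq_sum_range' (hp j), ← Fin.sum_univ_eq_sum_range]
  simp [vandermonde_apply, mul_comm]

theorem det_of_eval_add (p : Fin n → R[X]) (hp : ∀ j, (p j).natDegree < n) (v : Fin n → R)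
    (c : R) :
    (of fun i j => (p j).eval (v i + c)).det = (of fun i j => (p j).eval (v i)).det := by
  rw [of_eval_eq_vandermonde_mul p hp, of_eval_eq_vandermonde_mul p hp, det_mul, det_mul,
    det_vandermonde_add]

end Matrix

theorem Nat.choose_mul_factorial_add_mul_factorial_add {k n : ℕ} (hn : n ≤ k) (r b : ℕ) :
    k.choose n * ((n + r)! * (k - n + b)!) =
      k ! * ((n + r).descFactorial r * (k - n + b).descFactorial b) := by
  rw [← Nat.factorial_mul_descFactorial (Nat.le_add_left r n),
    ← Nat.factorial_mul_descFactorial (Nat.le_add_left b (k - n)), Nat.add_sub_cancel,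
    Nat.add_sub_cancel, ← Nat.choose_mul_factorial_mul_factorial hn]
  ring

noncomputable def vanZeipelPoly (u v r b : ℕ) : ℚ[X] :=
  (descPochhammer ℚ r).comp (C (u : ℚ) - X) * (descPochhammer ℚ b).comp (C (v : ℚ) + X)

theorem natDegree_vanZeipelPoly_le (u v r b : ℕ) :
    (vanZeipelPoly u v r b).natDegree ≤ r + b := by
  have hu : natDegree (C (u : ℚ) - X) ≤ 1 := by compute_degree
  have hv : natDegree (C (v : ℚ) + X) ≤ 1 := by compute_degree
  calc _ ≤ r * 1 + b * 1 := natDegree_mul_le.trans <| add_le_add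
          (natDegree_comp_le.trans (by rw [descPochhammer_natDegree]; gcongr))
          (natDegree_comp_le.trans (by rw [descPochhammer_natDegree]; gcongr))
    _ = r + b := by ring

theorem eval_vanZeipelPoly_natCast {u x : ℕ} (hx : x ≤ u) (v r b : ℕ) :
    (vanZeipelPoly u v r b).eval (x : ℚ) =
      ((u - x).descFactorial r * (v + x).descFactorial b : ℕ) := by
  rw [vanZeipelPoly, eval_mul, eval_comp, eval_comp]
  simp only [eval_sub, eval_add, eval_C, eval_X]
  rw [← Nat.cast_sub hx, ← Nat.cast_add, descPochhammer_eval_eq_descFactorial,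
    descPochhammer_eval_eq_descFactorial, Nat.cast_mul]

theorem vanZeipel_entry_mul {k i s a b : ℕ} (hik : i ≤ k) (ha : a < s) (hb : b < s) :
    (if a ≤ i + b then k.choose (i + b - a) else 0) * ((i + s - 1 - a)! * (k - i + a)!) =
      k ! * ((i + s - 1 - a).descFactorial (s - 1 - b) * (k - i + a).descFactorial b) := by
  split_ifs with hab
  · rcases le_or_gt (i + b - a) k with hk | hk
    · have h₁ : i + s - 1 - a = i + b - a + (s - 1 - b) := by omega
      have h₂ : k - i + a = k - (i + b - a) + b := by omega
      rw [h₁, h₂, Nat.choose_mul_factorial_add_mul_factorial_add hk]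
    · rw [Nat.choose_eq_zero_of_lt hk,
        Nat.descFactorial_eq_zero_iff_lt.mpr (by omega : k - i + a < b)]
      simp
  · rw [Nat.descFactorial_eq_zero_iff_lt.mpr (by omega : i + s - 1 - a < s - 1 - b)]
    simp

theorem vanZeipel_matrix_eq_diagonal_mul {k s i : ℕ} (hik : i ≤ k)
    (Ω : Matrix (Fin s) (Fin s) ℚ)
    (hΩ : ∀ a b : Fin s, Ω a b =
      if (a : ℕ) ≤ i + b then (Nat.choose k (i + b - a) : ℚ) else 0) :
    Ω = diagonal (fun a : Fin s => (k ! : ℚ) / ((i + s - 1 - a)! * (k - i + a)!)) *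
      of fun a b : Fin s =>
        (vanZeipelPoly (i + s - 1) (k - i) (s - 1 - b) b).eval ((a : ℕ) : ℚ) := by
  ext a b
  rw [diagonal_mul, of_apply, hΩ, eval_vanZeipelPoly_natCast (by omega), div_mul_eq_mul_div,
    eq_div_iff (by positivity)]
  exact_mod_cast vanZeipel_entry_mul hik a.2 b.2

theorem det_vanZeipelPoly_matrix {k s i : ℕ} (hik : i ≤ k) :
    (of fun a b : Fin s =>
        (vanZeipelPoly (i + s - 1) (k - i) (s - 1 - b) b).eval ((a : ℕ) : ℚ)).det =
      ∏ a : Fin s, ((s - 1 - a)! * (k + a).descFactorial a : ℚ) := by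
  have hdeg : ∀ b : Fin s, (vanZeipelPoly (i + s - 1) (k - i) (s - 1 - b) b).natDegree < s :=
    fun b => (natDegree_vanZeipelPoly_le _ _ _ _).trans_lt (by omega)
  have heval : ∀ a b : Fin s,
      (vanZeipelPoly (i + s - 1) (k - i) (s - 1 - b) b).eval (((a : ℕ) : ℚ) + i) =
        ((s - 1 - a).descFactorial (s - 1 - b) * (k + a).descFactorial b : ℕ) := by
    intro a b
    rw [← Nat.cast_add, eval_vanZeipelPoly_natCast (by omega)]
    congr 3 <;> omega
  rw [← det_of_eval_add _ hdeg _ (i : ℚ), det_of_isUpperTriangular]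
  · refine prod_congr rfl fun a _ => ?_
    rw [of_apply, heval, Nat.descFactorial_self]
    push_cast
    ring
  · intro a b hba
    rw [of_apply, heval, Nat.descFactorial_eq_zero_iff_lt.mpr (by simp only [id] at hba; omega)]
    simp

theorem vanZeipel_factor {k i : ℕ} (hik : i ≤ k) (a j : ℕ) :
    (k ! : ℚ) / ((i + j)! * (k - i + a)!) * (j ! * (k + a).descFactorial a) =
      ((k + a + j).choose (i + j) : ℚ) / (k + a + j).choose j := by
  have h₁ : ((k + a + j).choose (i + j) : ℚ) * (i + j)! * (k - i + a)! = (k + a + j)! := by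
    rw [show k - i + a = k + a + j - (i + j) by omega]
    exact_mod_cast Nat.choose_mul_factorial_mul_factorial (by omega)
  have h₂ : ((k + a + j).choose j : ℚ) * j ! * (k + a)! = (k + a + j)! := by
    exact_mod_cast Nat.add_sub_cancel (k + a) j ▸
      Nat.choose_mul_factorial_mul_factorial (Nat.le_add_left j (k + a))
  have h₃ : (k ! : ℚ) * (k + a).descFactorial a = (k + a)! := by
    exact_mod_cast Nat.add_sub_cancel k a ▸ Nat.factorial_mul_descFactorial (Nat.le_add_left a k)
  have hC : ((k + a + j).choose j : ℚ) ≠ 0 := by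
    exact_mod_cast (Nat.choose_pos (Nat.le_add_left j (k + a))).ne'
  rw [eq_div_iff hC]
  field_simp
  linear_combination ((j ! : ℚ) * (k + a + j).choose j) * h₃ + h₂ - h₁

theorem vanZeipel_det_ratio_general (k s i : ℕ)
    (Ω : Matrix (Fin s) (Fin s) ℚ)
    (hΩ : ∀ a b : Fin s, Ω a b =
      if (a : ℕ) ≤ i + b then (Nat.choose k (i + b - a) : ℚ) else 0) :
    Ω.det = (∏ j ∈ Finset.range s, (Nat.choose (k + s - 1) (i + j) : ℚ)) /
            (∏ j ∈ Finset.range s, (Nat.choose (k + s - 1) j : ℚ)) := by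
  rcases le_or_gt i k with hik | hki
  · rw [vanZeipel_matrix_eq_diagonal_mul hik Ω hΩ, det_mul, det_diagonal,
      det_vanZeipelPoly_matrix hik, ← prod_mul_distrib, ← prod_div_distrib,
      ← prod_range_reflect, prod_range]
    refine prod_congr rfl fun a _ => ?_
    rw [show i + s - 1 - a = i + (s - 1 - a) by omega,
      show k + s - 1 = k + a + (s - 1 - a) by omega]
    exact vanZeipel_factor hik a (s - 1 - a)
  · obtain _ | s := s
    · simp
    have hrow : Ω 0 = 0 := funext fun b => by
      simp [hΩ, Nat.choose_eq_zero_of_lt (by omega : k < i + b)]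
    rw [det_eq_zero_of_row_eq_zero 0 (congrFun hrow), prod_eq_zero (mem_range.mpr s.lt_succ_self)
      (by rw [Nat.choose_eq_zero_of_lt (by omega), Nat.cast_zero]), zero_div]

/-- For `s ≥ 1`, the `s × s` Toeplitz matrix `Ω` with `(a,b)` entry `C(k, i + b - a)`
(zero when `i + b < a`) has
`det Ω = (∏_{j=0}^{s-1} C(k+s-1, i+j)) / (∏_{j=0}^{s-1} C(k+s-1, j))` in `ℚ`. -/
theorem vanZeipel_det_ratio (k s i : ℕ) (hs : 1 ≤ s)
    (Ω : Matrix (Fin s) (Fin s) ℚ)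
    (hΩ : ∀ a b : Fin s, Ω a b =
      if (a : ℕ) ≤ i + b then (Nat.choose k (i + b - a) : ℚ) else 0) :
    Ω.det = (∏ j ∈ Finset.range s, (Nat.choose (k + s - 1) (i + j) : ℚ)) /
            (∏ j ∈ Finset.range s, (Nat.choose (k + s - 1) j : ℚ)) :=
  vanZeipel_det_ratio_general k s i Ω hΩ
end

section
/- Let k, s ∈ ℕ with s ≥ 1 and i ∈ ℕ. The s × s Toeplitz matrix Ω with (a,b) entry C(k, i+b-a) satisfies: det Ω equals the determinant of the s × s matrix whose (a, b) entry is C(k + a - 1, i + b - 1). -/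
lemma vanZeipel_key (a k n s : ℕ) (ha : a < s) :
    ∑ c ∈ Finset.range s, a.choose c * (if c ≤ n then k.choose (n - c) else 0)
      = (k + a).choose n := by
  rw [add_comm k a, Nat.add_choose_eq, Finset.Nat.sum_antidiagonal_eq_sum_range_succ_mk]
  set f : ℕ → ℕ := fun c => a.choose c * (if c ≤ n then k.choose (n - c) else 0) with hf
  have hL : ∑ c ∈ Finset.range s, f c = ∑ c ∈ Finset.range (max s (n + 1)), f c := by
    apply Finset.sum_subset (Finset.range_subset_range.2 (le_max_left _ _))
    intro c _ hc
    have : a < c := lt_of_lt_of_le ha (by simpa using Finset.mem_range.not.mp hc)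
    simp [hf, Nat.choose_eq_zero_of_lt this]
  have hR : ∑ c ∈ Finset.range (n + 1), a.choose c * k.choose (n - c)
      = ∑ c ∈ Finset.range (max s (n + 1)), f c := by
    rw [show (∑ c ∈ Finset.range (n + 1), a.choose c * k.choose (n - c))
        = ∑ c ∈ Finset.range (n + 1), f c from Finset.sum_congr rfl (by
          intro c hc
          have : c ≤ n := Nat.lt_succ_iff.mp (Finset.mem_range.mp hc)
          simp [hf, this])]
    apply Finset.sum_subset (Finset.range_subset_range.2 (le_max_right _ _))
    intro c _ hc
    have : n < c := Nat.lt_of_succ_le (by simpa using Finset.mem_range.not.mp hc)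
    simp [hf, Nat.not_le.mpr this]
  rw [hL, ← hR]

/-- Row-reduction step in van Zeipel's evaluation: for `s ≥ 1`, the `s × s` Toeplitz
matrix with `(a,b)` entry `C(k, i + b - a)` (zero when `i + b < a`) has the same
determinant as the shifted Pascal matrix with `(a,b)` entry `C(k + a - 1, i + b - 1)`
(here rows and columns are indexed by `Fin s`, so `a - 1, b - 1` correspond to the
natural number values of the indices). -/
theorem vanZeipel_row_reduction (k s i : ℕ) (hs : 1 ≤ s)
    (Ω P : Matrix (Fin s) (Fin s) ℤ)
    (hΩ : ∀ a b : Fin s, Ω a b =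
      if (a : ℕ) ≤ i + b then (Nat.choose k (i + b - a) : ℤ) else 0)
    (hP : ∀ a b : Fin s, P a b = (Nat.choose (k + a) (i + b) : ℤ)) :
    Ω.det = P.det := by
  set L : Matrix (Fin s) (Fin s) ℤ := fun a c => ((a : ℕ).choose c : ℤ) with hLdef
  have hLtri : L.BlockTriangular OrderDual.toDual := by
    intro a c h
    simp only [OrderDual.toDual_lt_toDual] at h
    simp [hLdef, Nat.choose_eq_zero_of_lt (show (a : ℕ) < c from h)]
  have hLdet : L.det = 1 := by
    rw [Matrix.det_of_lowerTriangular L hLtri]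
    simp [hLdef]
  have hPL : P = L * Ω := by
    ext a b
    rw [Matrix.mul_apply, hP]
    have key := vanZeipel_key a k (i + b) s a.isLt
    calc ((k + (a : ℕ)).choose (i + b) : ℤ)
        = ((∑ c ∈ Finset.range s,
            (a : ℕ).choose c * (if c ≤ i + b then k.choose (i + b - c) else 0) : ℕ) : ℤ) := by
          rw [key]
      _ = ∑ c : Fin s, L a c * Ω c b := by
          push_cast
          rw [← Fin.sum_univ_eq_sum_range
            (fun c => ((a : ℕ).choose c : ℤ) * (if c ≤ i + b then (k.choose (i + b - c) : ℤ) else 0))]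
          apply Finset.sum_congr rfl
          intro c _
          rw [hΩ, hLdef]
  rw [hPL, Matrix.det_mul, hLdet, one_mul]
end

section
/- Let i ∈ ℕ with i ≥ 1, k ≥ 1, s ≥ 1. Then det [C(k+a-1, i+b-1)]_{1≤a,b≤s} = (∏_{j=0}^{s-1} (k+j)/(i+j)) · det [C(k+a-2, i+b-2)]_{1≤a,b≤s}. -/
/-!
Pascal's absorption identity `C(m, n) = (m / n) · C(m - 1, n - 1)` writes each entry of the
first matrix as `(k + a) · C(k - 1 + a, i - 1 + b) / (i + b)`. The factor `k + a` depends only on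
the row and `1 / (i + b)` only on the column, so both come out of the determinant by
multilinearity.
-/

open Finset Matrix

theorem Nat.cast_choose_succ_succ_eq {K : Type*} [Field K] [CharZero K] (m n : ℕ) :
    ((m + 1).choose (n + 1) : K) = (m + 1) / (n + 1) * m.choose n := by
  have h : ((m + 1 : ℕ) * m.choose n : K) = (m + 1).choose (n + 1) * (n + 1 : ℕ) := by
    exact_mod_cast Nat.add_one_mul_choose_eq m n
  push_cast at h
  rw [div_mul_eq_mul_div, eq_div_iff (Nat.cast_add_one_ne_zero n), ← h]

theorem Matrix.det_of_row_col_mul {n R : Type*} [Fintype n] [DecidableEq n] [CommRing R]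
    (u v : n → R) (A : Matrix n n R) :
    det (of fun a b => u a * A a b * v b) = (∏ a, u a) * (∏ b, v b) * det A := by
  have h : (of fun a b => u a * A a b * v b) =
      of fun a b => u a * (of fun a b => v b * A a b) a b := by
    ext a b
    simp only [of_apply]
    ring
  rw [h, det_mul_column, det_mul_row, mul_assoc]

theorem vanZeipel_inductive_step_general (i k s : ℕ) (hi : 1 ≤ i) (hk : 1 ≤ k)
    (P P' : Matrix (Fin s) (Fin s) ℚ)
    (hP : ∀ a b : Fin s, P a b = (Nat.choose (k + a) (i + b) : ℚ))
    (hP' : ∀ a b : Fin s, P' a b = (Nat.choose (k - 1 + a) (i - 1 + b) : ℚ)) :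
    P.det = (∏ j ∈ Finset.range s, ((k + j : ℚ) / (i + j : ℚ))) * P'.det := by
  have hentry : P = of fun a b => ((k : ℚ) + a) * P' a b * ((i : ℚ) + b)⁻¹ := by
    ext a b
    obtain ⟨k', rfl⟩ := Nat.exists_eq_add_of_le' hk
    obtain ⟨i', rfl⟩ := Nat.exists_eq_add_of_le' hi
    rw [hP, of_apply, hP', Nat.add_sub_cancel, Nat.add_sub_cancel, Nat.add_right_comm,
      Nat.add_right_comm i', Nat.cast_choose_succ_succ_eq]
    push_cast
    ring
  rw [hentry, det_of_row_col_mul, Fin.prod_univ_eq_prod_range (fun j => (k : ℚ) + j),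
    Fin.prod_univ_eq_prod_range (fun j => ((i : ℚ) + j)⁻¹), prod_div_distrib, div_eq_mul_inv,
    prod_inv_distrib]

/-- Inductive step in van Zeipel's determinant computation: for `i, k, s ≥ 1`,
`det [C(k+a-1, i+b-1)]_{1≤a,b≤s} = (∏_{j=0}^{s-1} (k+j)/(i+j)) · det [C(k+a-2, i+b-2)]`,
where the matrices are indexed by `Fin s` (so `a - 1`, `b - 1` correspond to the
natural-number values of the indices) and the identity is computed in `ℚ`. -/
theorem vanZeipel_inductive_step (i k s : ℕ) (hi : 1 ≤ i) (hk : 1 ≤ k) (hs : 1 ≤ s)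
    (P P' : Matrix (Fin s) (Fin s) ℚ)
    (hP : ∀ a b : Fin s, P a b = (Nat.choose (k + a) (i + b) : ℚ))
    (hP' : ∀ a b : Fin s, P' a b = (Nat.choose (k - 1 + a) (i - 1 + b) : ℚ)) :
    P.det = (∏ j ∈ Finset.range s, ((k + j : ℚ) / (i + j : ℚ))) * P'.det :=
  vanZeipel_inductive_step_general i k s hi hk P P' hP hP'
end

section
/- Let r, k ≥ 1 and let Q̃_{r, r+k} be the r × (r+k) integer matrix with (a, b) entry C(k, b-a) (zero if b-a < 0 or b-a > k). If Δ is a submatrix of Q̃_{r,r+k} formed by c > 0 consecutive columns, s := min{c, r}, and p is a prime dividing every s × s minor of Δ, then p divides C(r+k-1, l) for some l with 0 ≤ l ≤ r+k-1. -/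
open Finset

lemma aux_prod_Ioi_factorial : ∀ r : ℕ,
    (∏ i : Fin r, ∏ j ∈ Finset.Ioi i, ((j : ℤ) - (i : ℤ))) = ∏ i : Fin r, ((i : ℕ).factorial : ℤ) := by
  intro r
  induction r with
  | zero => simp
  | succ r ih =>
    rw [Fin.prod_univ_succ, Fin.prod_univ_castSucc]
    have h0 : (∏ j ∈ Finset.Ioi (0 : Fin (r+1)), (((j : Fin (r+1)) : ℤ) - (((0 : Fin (r+1)) : ℕ) : ℤ)))
        = (r.factorial : ℤ) := by
      rw [Fin.prod_Ioi_zero]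
      have h1 : ∀ j : Fin r, ((j.succ : ℤ) - (((0 : Fin (r+1)) : ℕ) : ℤ)) = ((j : ℕ) : ℤ) + 1 := by
        intro j; simp [Fin.val_succ]
      rw [Finset.prod_congr rfl (fun j _ => h1 j)]
      rw [Fin.prod_univ_eq_prod_range (fun j => ((j : ℤ) + 1)) r]
      rw [← Finset.prod_range_add_one_eq_factorial r]
      push_cast
      rfl
    have h2 : ∀ i : Fin r,
        (∏ j ∈ Finset.Ioi i.succ, (((j : Fin (r+1)) : ℤ) - ((i.succ : ℕ) : ℤ)))
          = ∏ j ∈ Finset.Ioi i, ((j : ℤ) - (i : ℤ)) := by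
      intro i
      rw [Fin.prod_Ioi_succ]
      refine Finset.prod_congr rfl (fun j _ => ?_)
      simp [Fin.val_succ]
    rw [h0, Finset.prod_congr rfl (fun i (_ : i ∈ Finset.univ) => h2 i), ih]
    have : ∀ i : Fin r, ((i.castSucc : ℕ).factorial : ℤ) = ((i : ℕ).factorial : ℤ) := by
      intro i; simp [Fin.castSucc]
    rw [Finset.prod_congr rfl (fun i (_ : i ∈ Finset.univ) => this i)]
    simp [Fin.last]
    ring

lemma aux_descFactorial_add (x w : ℕ) : ∀ j : ℕ,
    x.descFactorial (w + j) = x.descFactorial w * (x - w).descFactorial j := by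
  intro j
  induction j with
  | zero => simp
  | succ j ih =>
    rw [← Nat.add_assoc, Nat.descFactorial_succ, Nat.descFactorial_succ, ih]
    have : x - (w + j) = x - w - j := by omega
    rw [this]
    ring

lemma aux_det_binomial (r k w : ℕ) (hw : w ≤ k) :
    (Matrix.det (Matrix.of fun i j : Fin r => (((k + (i : ℕ)).choose (w + (j : ℕ)) : ℕ) : ℤ)))
      * ((∏ i : Fin r, (((w + (i : ℕ)).factorial : ℕ) : ℤ))
        * (∏ i : Fin r, (((k - w + (i : ℕ)).factorial : ℕ) : ℤ)))
    = (∏ i : Fin r, (((i : ℕ).factorial : ℕ) : ℤ))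
        * ∏ i : Fin r, (((k + (i : ℕ)).factorial : ℕ) : ℤ) := by
  -- step 1: multiply columns by (w+j)! : entries become descFactorials, which split
  have key : ∀ i j : Fin r,
      (((w + (j : ℕ)).factorial : ℕ) : ℤ) * (((k + (i : ℕ)).choose (w + (j : ℕ)) : ℕ) : ℤ)
      = (((k + (i : ℕ)).descFactorial w : ℕ) : ℤ)
          * (((k - w + (i : ℕ)).descFactorial (j : ℕ) : ℕ) : ℤ) := by
    intro i j
    rw [← Nat.cast_mul, ← Nat.cast_mul, ← Nat.descFactorial_eq_factorial_mul_choose,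
      aux_descFactorial_add (k + i) w j]
    have hh : k + (i : ℕ) - w = k - w + (i : ℕ) := by omega
    rw [hh]
  have h1 : Matrix.det (Matrix.of fun i j : Fin r =>
        (((w + (j : ℕ)).factorial : ℕ) : ℤ) * (((k + (i : ℕ)).choose (w + (j : ℕ)) : ℕ) : ℤ))
      = (∏ j : Fin r, (((w + (j : ℕ)).factorial : ℕ) : ℤ))
        * Matrix.det (Matrix.of fun i j : Fin r => (((k + (i : ℕ)).choose (w + (j : ℕ)) : ℕ) : ℤ)) :=
    Matrix.det_mul_row _ _
  have h2 : Matrix.det (Matrix.of fun i j : Fin r =>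
        (((k + (i : ℕ)).descFactorial w : ℕ) : ℤ)
          * (((k - w + (i : ℕ)).descFactorial (j : ℕ) : ℕ) : ℤ))
      = (∏ i : Fin r, (((k + (i : ℕ)).descFactorial w : ℕ) : ℤ))
        * Matrix.det (Matrix.of fun i j : Fin r => (((k - w + (i : ℕ)).descFactorial (j : ℕ) : ℕ) : ℤ)) :=
    Matrix.det_mul_column _ _
  have h12 : Matrix.det (Matrix.of fun i j : Fin r =>
        (((w + (j : ℕ)).factorial : ℕ) : ℤ) * (((k + (i : ℕ)).choose (w + (j : ℕ)) : ℕ) : ℤ))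
      = Matrix.det (Matrix.of fun i j : Fin r =>
        (((k + (i : ℕ)).descFactorial w : ℕ) : ℤ)
          * (((k - w + (i : ℕ)).descFactorial (j : ℕ) : ℕ) : ℤ)) := by
    congr 1
    ext i j
    exact key i j
  -- step 2: the descFactorial matrix is a polynomial evaluation matrix; Vandermonde
  have h3 : Matrix.det (Matrix.of fun i j : Fin r =>
        (((k - w + (i : ℕ)).descFactorial (j : ℕ) : ℕ) : ℤ))
      = ∏ i : Fin r, (((i : ℕ).factorial : ℕ) : ℤ) := by
    have he : ∀ i j : Fin r,
        (((k - w + (i : ℕ)).descFactorial (j : ℕ) : ℕ) : ℤ)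
        = Polynomial.eval (((k - w + (i : ℕ) : ℕ) : ℤ)) (descPochhammer ℤ (j : ℕ)) := by
      intro i j
      rw [descPochhammer_eval_eq_descFactorial]
    have hv := Matrix.det_eval_matrixOfPolynomials_eq_det_vandermonde
      (fun i : Fin r => ((k - w + (i : ℕ) : ℕ) : ℤ)) (fun j : Fin r => descPochhammer ℤ (j : ℕ))
      (fun j => descPochhammer_natDegree (R := ℤ) (j : ℕ)) (fun j => monic_descPochhammer ℤ (j : ℕ))
    have hm : Matrix.det (Matrix.of fun i j : Fin r =>
          (((k - w + (i : ℕ)).descFactorial (j : ℕ) : ℕ) : ℤ))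
        = (Matrix.vandermonde (fun i : Fin r => ((k - w + (i : ℕ) : ℕ) : ℤ))).det := by
      rw [hv]
      congr 1
      ext i j
      exact he i j
    rw [hm, Matrix.det_vandermonde, ← aux_prod_Ioi_factorial r]
    refine Finset.prod_congr rfl (fun i _ => Finset.prod_congr rfl (fun j _ => ?_))
    push_cast
    ring
  -- assemble
  have hA := h1.symm.trans (h12.trans (h2.trans (by rw [h3])))
  -- hA : (∏ (w+j)!) * det M = (∏ desc(k+i, w)) * ∏ i!
  have hfin : ∀ i : Fin r,
      (((k + (i : ℕ)).descFactorial w : ℕ) : ℤ) * (((k - w + (i : ℕ)).factorial : ℕ) : ℤ)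
        = (((k + (i : ℕ)).factorial : ℕ) : ℤ) := by
    intro i
    rw [← Nat.cast_mul]
    congr 1
    have h := Nat.factorial_mul_descFactorial (show w ≤ k + (i : ℕ) by omega)
    have : k + (i : ℕ) - w = k - w + (i : ℕ) := by omega
    rw [this] at h
    rw [Nat.mul_comm]
    exact h
  calc (Matrix.det (Matrix.of fun i j : Fin r => (((k + (i : ℕ)).choose (w + (j : ℕ)) : ℕ) : ℤ)))
      * ((∏ i : Fin r, (((w + (i : ℕ)).factorial : ℕ) : ℤ))
        * (∏ i : Fin r, (((k - w + (i : ℕ)).factorial : ℕ) : ℤ)))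
      = ((∏ i : Fin r, (((w + (i : ℕ)).factorial : ℕ) : ℤ))
          * Matrix.det (Matrix.of fun i j : Fin r => (((k + (i : ℕ)).choose (w + (j : ℕ)) : ℕ) : ℤ)))
        * (∏ i : Fin r, (((k - w + (i : ℕ)).factorial : ℕ) : ℤ)) := by ring
    _ = ((∏ i : Fin r, (((k + (i : ℕ)).descFactorial w : ℕ) : ℤ))
          * ∏ i : Fin r, (((i : ℕ).factorial : ℕ) : ℤ))
        * (∏ i : Fin r, (((k - w + (i : ℕ)).factorial : ℕ) : ℤ)) := by rw [hA]
    _ = (∏ i : Fin r, (((i : ℕ).factorial : ℕ) : ℤ))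
        * ∏ i : Fin r, ((((k + (i : ℕ)).descFactorial w : ℕ) : ℤ)
            * (((k - w + (i : ℕ)).factorial : ℕ) : ℤ)) := by
        rw [Finset.prod_mul_distrib]; ring
    _ = (∏ i : Fin r, (((i : ℕ).factorial : ℕ) : ℤ))
        * ∏ i : Fin r, (((k + (i : ℕ)).factorial : ℕ) : ℤ) := by
        rw [Finset.prod_congr rfl (fun i (_ : i ∈ Finset.univ) => hfin i)]

-- Vandermonde convolution giving the Pascal factorization
lemma aux_pascal_entry (r k w : ℕ) (i j : Fin r) :
    (((k + (i : ℕ)).choose (w + (j : ℕ)) : ℕ) : ℤ)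
      = ∑ d : Fin r, (((i : ℕ).choose (d : ℕ) : ℕ) : ℤ)
          * (if (d : ℕ) ≤ w + (j : ℕ) then ((k.choose (w + (j : ℕ) - (d : ℕ)) : ℕ) : ℤ) else 0) := by
  set x := w + (j : ℕ) with hx
  have hnat : ((i : ℕ) + k).choose x = ∑ d ∈ Finset.range (x + 1), (i : ℕ).choose d * k.choose (x - d) := by
    rw [Nat.add_choose_eq]
    rw [Finset.Nat.sum_antidiagonal_eq_sum_range_succ_mk]
  -- define the integer-valued extended summand
  set g : ℕ → ℤ := fun d => (((i : ℕ).choose d : ℕ) : ℤ)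
      * (if d ≤ x then ((k.choose (x - d) : ℕ) : ℤ) else 0) with hg
  have hr : ∑ d : Fin r, g (d : ℕ) = ∑ d ∈ Finset.range r, g d := by
    exact Fin.sum_univ_eq_sum_range g r
  have hbig1 : ∑ d ∈ Finset.range r, g d = ∑ d ∈ Finset.range (max r (x + 1)), g d := by
    refine Finset.sum_subset (Finset.range_subset_range.2 (le_max_left _ _)) ?_
    intro d _ hd
    rw [Finset.mem_range, not_lt] at hd
    have : (i : ℕ) < d := lt_of_lt_of_le i.2 hd
    simp [hg, Nat.choose_eq_zero_of_lt this]
  have hbig2 : ∑ d ∈ Finset.range (x + 1), g d = ∑ d ∈ Finset.range (max r (x + 1)), g d := by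
    refine Finset.sum_subset (Finset.range_subset_range.2 (le_max_right _ _)) ?_
    intro d _ hd
    rw [Finset.mem_range, not_lt] at hd
    have : ¬ d ≤ x := by omega
    simp [hg, this]
  have hleft : (((k + (i : ℕ)).choose x : ℕ) : ℤ) = ∑ d ∈ Finset.range (x + 1), g d := by
    have : ∀ d ∈ Finset.range (x + 1), g d = (((i : ℕ).choose d * k.choose (x - d) : ℕ) : ℤ) := by
      intro d hd
      rw [Finset.mem_range] at hd
      have : d ≤ x := by omega
      simp [hg, this]
    rw [Finset.sum_congr rfl this, ← Nat.cast_sum, ← hnat, Nat.add_comm (i : ℕ) k]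
  rw [hr, hbig1, ← hbig2, ← hleft]

lemma aux_det_eq_det (r k w : ℕ) :
    Matrix.det (Matrix.of fun i j : Fin r =>
        (if (i : ℕ) ≤ w + (j : ℕ) then ((k.choose (w + (j : ℕ) - (i : ℕ)) : ℕ) : ℤ) else 0))
      = Matrix.det (Matrix.of fun i j : Fin r => (((k + (i : ℕ)).choose (w + (j : ℕ)) : ℕ) : ℤ)) := by
  set A : Matrix (Fin r) (Fin r) ℤ := Matrix.of fun i j : Fin r =>
        (if (i : ℕ) ≤ w + (j : ℕ) then ((k.choose (w + (j : ℕ) - (i : ℕ)) : ℕ) : ℤ) else 0) with hA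
  set P : Matrix (Fin r) (Fin r) ℤ := Matrix.of fun i d : Fin r =>
        (((i : ℕ).choose (d : ℕ) : ℕ) : ℤ) with hP
  have hM : Matrix.of (fun i j : Fin r => (((k + (i : ℕ)).choose (w + (j : ℕ)) : ℕ) : ℤ)) = P * A := by
    ext i j
    rw [Matrix.mul_apply]
    exact aux_pascal_entry r k w i j
  have hPdet : P.det = 1 := by
    have htri : P.BlockTriangular OrderDual.toDual := by
      intro i j hij
      have : (i : ℕ) < (j : ℕ) := hij
      simp [hP, Nat.choose_eq_zero_of_lt this]
    rw [Matrix.det_of_lowerTriangular P htri]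
    simp [hP]
  rw [hM, Matrix.det_mul, hPdet, one_mul]

-- under the no-divisibility hypothesis, factorial p-valuations add up with no carry
lemma aux_factorization_add (p n : ℕ) (hp : p.Prime)
    (H : ∀ l ≤ n, ¬ p ∣ n.choose l) :
    ∀ z ≤ n, (z.factorial.factorization) p + ((n - z).factorial.factorization) p
      = (n.factorial.factorization) p := by
  intro z hz
  have hfac : n.choose z * z.factorial * (n - z).factorial = n.factorial :=
    Nat.choose_mul_factorial_mul_factorial hz
  have h1 : (n.choose z * z.factorial * (n - z).factorial).factorization
      = (n.choose z).factorization + z.factorial.factorization + (n - z).factorial.factorization := by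
    rw [Nat.factorization_mul (Nat.mul_ne_zero (Nat.choose_pos hz).ne' (Nat.factorial_ne_zero _))
      (Nat.factorial_ne_zero _),
      Nat.factorization_mul (Nat.choose_pos hz).ne' (Nat.factorial_ne_zero _)]
  have h2 : (n.choose z).factorization p = 0 := Nat.factorization_eq_zero_of_not_dvd (H z hz)
  have := congrArg (fun f : ℕ →₀ ℕ => f p) (hfac ▸ h1)
  simp only [Finsupp.add_apply] at this
  omega

lemma aux_not_dvd_det (r k w p : ℕ) (hp : p.Prime) (hw : w ≤ k) (hr : 1 ≤ r)
    (H : ∀ l ≤ r + k - 1, ¬ p ∣ (r + k - 1).choose l) :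
    ¬ (p : ℤ) ∣ Matrix.det (Matrix.of fun i j : Fin r =>
        (if (i : ℕ) ≤ w + (j : ℕ) then ((k.choose (w + (j : ℕ) - (i : ℕ)) : ℕ) : ℤ) else 0)) := by
  obtain ⟨r', rfl⟩ : ∃ r', r = r' + 1 := ⟨r - 1, by omega⟩
  set r := r' + 1
  set n := k + r' with hn
  have Hn : ∀ l ≤ n, ¬ p ∣ n.choose l := by
    have : r + k - 1 = n := by omega
    rw [← this]; exact H
  have V := aux_factorization_add p n hp Hn
  -- the two natural number products
  set D : ℕ := ∏ i ∈ Finset.range r, ((w + i).factorial * (k - w + i).factorial) with hD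
  set N : ℕ := ∏ i ∈ Finset.range r, (i.factorial * (k + i).factorial) with hN
  have hDpos : 0 < D := Finset.prod_pos (fun i _ => by positivity)
  have hNpos : 0 < N := Finset.prod_pos (fun i _ => by positivity)
  -- equal p-valuations
  have hval : N.factorization p = D.factorization p := by
    have hsplit : ∀ (f g : ℕ → ℕ),
        ((∏ i ∈ Finset.range r, ((f i).factorial * (g i).factorial)).factorization) p
        = ∑ i ∈ Finset.range r, ((f i).factorial.factorization p + (g i).factorial.factorization p) := by
      intro f g
      rw [Nat.factorization_prod (fun i _ => by positivity)]
      rw [Finsupp.finset_sum_apply]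
      refine Finset.sum_congr rfl (fun i _ => ?_)
      rw [Nat.factorization_mul (Nat.factorial_ne_zero _) (Nat.factorial_ne_zero _),
        Finsupp.add_apply]
    rw [hN, hD, hsplit, hsplit]
    have hNsum : ∑ i ∈ Finset.range r, (i.factorial.factorization p + (k + i).factorial.factorization p)
        = r * n.factorial.factorization p := by
      rw [Finset.sum_add_distrib]
      have hre : ∑ i ∈ Finset.range r, (i.factorial.factorization) p
          = ∑ i ∈ Finset.range r, ((r - 1 - i).factorial.factorization) p :=
        (Finset.sum_range_reflect (fun i => (i.factorial.factorization) p) r).symm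
      rw [hre, ← Finset.sum_add_distrib]
      have hcon : ∀ i ∈ Finset.range r,
          ((r - 1 - i).factorial.factorization p + (k + i).factorial.factorization p)
            = n.factorial.factorization p := by
        intro i hi
        rw [Finset.mem_range] at hi
        have h1 : r - 1 - i = n - (k + i) := by omega
        have h2 : k + i ≤ n := by omega
        rw [h1]
        have := V (k + i) h2
        omega
      rw [Finset.sum_congr rfl hcon, Finset.sum_const, Finset.card_range, smul_eq_mul]
    have hDsum : ∑ i ∈ Finset.range r, ((w + i).factorial.factorization p + (k - w + i).factorial.factorization p)
        = r * n.factorial.factorization p := by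
      rw [Finset.sum_add_distrib]
      have hre : ∑ i ∈ Finset.range r, ((k - w + i).factorial.factorization) p
          = ∑ i ∈ Finset.range r, ((k - w + (r - 1 - i)).factorial.factorization) p :=
        (Finset.sum_range_reflect (fun i => ((k - w + i).factorial.factorization) p) r).symm
      rw [hre, ← Finset.sum_add_distrib]
      have hcon : ∀ i ∈ Finset.range r,
          ((w + i).factorial.factorization p + (k - w + (r - 1 - i)).factorial.factorization p)
            = n.factorial.factorization p := by
        intro i hi
        rw [Finset.mem_range] at hi
        have h1 : k - w + (r - 1 - i) = n - (w + i) := by omega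
        have h2 : w + i ≤ n := by omega
        rw [h1]
        exact V (w + i) h2
      rw [Finset.sum_congr rfl hcon, Finset.sum_const, Finset.card_range, smul_eq_mul]
    rw [hNsum, hDsum]
  -- now the determinant identity
  intro hdvd
  set dA := Matrix.det (Matrix.of fun i j : Fin r =>
      (if (i : ℕ) ≤ w + (j : ℕ) then ((k.choose (w + (j : ℕ) - (i : ℕ)) : ℕ) : ℤ) else 0)) with hdA
  set dM := Matrix.det (Matrix.of fun i j : Fin r =>
      (((k + (i : ℕ)).choose (w + (j : ℕ)) : ℕ) : ℤ)) with hdM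
  have hdd : dA = dM := aux_det_eq_det r k w
  have hdet := aux_det_binomial r k w hw
  rw [← hdM] at hdet
  -- convert Fin products to casts of the ℕ products
  have hprodD : (∏ i : Fin r, (((w + (i : ℕ)).factorial : ℕ) : ℤ))
      * (∏ i : Fin r, (((k - w + (i : ℕ)).factorial : ℕ) : ℤ)) = (D : ℤ) := by
    rw [hD]
    push_cast
    rw [Finset.prod_mul_distrib]
    rw [← Fin.prod_univ_eq_prod_range (fun i => ((w + i).factorial : ℤ)) r,
      ← Fin.prod_univ_eq_prod_range (fun i => ((k - w + i).factorial : ℤ)) r]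
  have hprodN : (∏ i : Fin r, (((i : ℕ).factorial : ℕ) : ℤ))
      * (∏ i : Fin r, (((k + (i : ℕ)).factorial : ℕ) : ℤ)) = (N : ℤ) := by
    rw [hN]
    push_cast
    rw [Finset.prod_mul_distrib]
    rw [← Fin.prod_univ_eq_prod_range (fun i => ((i).factorial : ℤ)) r,
      ← Fin.prod_univ_eq_prod_range (fun i => ((k + i).factorial : ℤ)) r]
  rw [hprodD, hprodN] at hdet
  -- dM * D = N
  have hdMpos : 0 < dM := by
    rcases lt_trichotomy dM 0 with h | h | h
    · exfalso
      have : dM * (D : ℤ) < 0 := mul_neg_of_neg_of_pos h (by exact_mod_cast hDpos)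
      rw [hdet] at this
      exact absurd this (not_lt.2 (by positivity))
    · exfalso
      have hz : (N : ℤ) = 0 := by rw [← hdet, h, zero_mul]
      have : N = 0 := by exact_mod_cast hz
      omega
    · exact h
  set m := dM.toNat with hm
  have hmz : dM = (m : ℤ) := (Int.toNat_of_nonneg hdMpos.le).symm
  have hmD : m * D = N := by
    have : (m : ℤ) * (D : ℤ) = (N : ℤ) := by rw [← hmz]; exact hdet
    exact_mod_cast this
  have hpm : p ∣ m := by
    have : (p : ℤ) ∣ (m : ℤ) := by rw [← hmz, ← hdd]; exact hdvd
    exact_mod_cast this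
  have hm0 : m ≠ 0 := by
    intro h
    rw [h, zero_mul] at hmD
    omega
  have : N.factorization p = m.factorization p + D.factorization p := by
    rw [← hmD, Nat.factorization_mul hm0 hDpos.ne', Finsupp.add_apply]
  have hpos : 0 < m.factorization p := hp.factorization_pos_of_dvd hm0 hpm
  omega

-- expansion of det (B * A) by multilinearity over choices of rows of A
lemma aux_det_mul_expand {c r : ℕ} {K : Type*} [CommRing K]
    (B : Matrix (Fin c) (Fin r) K) (A : Matrix (Fin r) (Fin c) K) :
    (B * A).det = ∑ f ∈ Fintype.piFinset (fun _ : Fin c => (Finset.univ : Finset (Fin r))),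
      (∏ i, B i (f i)) * (A.submatrix f id).det := by
  have h : (B * A) = Matrix.of fun i => ∑ l : Fin r, B i l • A l := by
    ext i j
    simp [Matrix.mul_apply]
  rw [h]
  have hdet : (Matrix.of fun i => ∑ l : Fin r, B i l • A l).det
      = (Matrix.detRowAlternating (R := K) (n := Fin c)).toMultilinearMap
          (fun i => ∑ l : Fin r, B i l • A l) := rfl
  rw [hdet, MultilinearMap.map_sum_finset]
  refine Finset.sum_congr rfl (fun f _ => ?_)
  have : (Matrix.detRowAlternating (R := K) (n := Fin c)).toMultilinearMap
        (fun i => B i (f i) • A (f i))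
      = (∏ i, B i (f i)) • (Matrix.detRowAlternating (R := K) (n := Fin c)).toMultilinearMap
          (fun i => A (f i)) :=
    MultilinearMap.map_smul_univ _ _ _
  rw [this, smul_eq_mul]
  rfl

/-- `Q̃_{r,r+k}` : the `r × (r+k)` integer matrix with `(a,b)` entry `C(k, b-a)`
(which vanishes when `b - a < 0` or `b - a > k`). -/
def Qtilde (r k : ℕ) : Matrix (Fin r) (Fin (r + k)) ℤ := fun a b =>
  if (a : ℕ) ≤ (b : ℕ) then (Nat.choose k ((b : ℕ) - (a : ℕ)) : ℤ) else 0

/-- If `Δ` is the submatrix of `Q̃_{r,r+k}` formed by `c > 0` consecutive columns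
starting at column `t`, `s = min c r`, and `p` is a prime dividing every
`s × s` minor of `Δ`, then `p` divides `C(r+k-1, l)` for some `0 ≤ l ≤ r+k-1`. -/
theorem prime_dvd_choose_of_dvd_minors (r k c t : ℕ) (hr : 1 ≤ r) (hk : 1 ≤ k)
    (hc : 0 < c) (htc : t + c ≤ r + k) (p : ℕ) (hp : p.Prime)
    (Δ : Matrix (Fin r) (Fin c) ℤ)
    (hΔ : ∀ (a : Fin r) (j : Fin c), Δ a j = Qtilde r k a ⟨t + j, by omega⟩)
    (hmin : ∀ (rows : Fin (min c r) → Fin r) (cols : Fin (min c r) → Fin c),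
      (p : ℤ) ∣ (Δ.submatrix rows cols).det) :
    ∃ l ≤ r + k - 1, p ∣ Nat.choose (r + k - 1) l := by
  by_contra hcon
  push_neg at hcon
  have H : ∀ l ≤ r + k - 1, ¬ p ∣ (r + k - 1).choose l := hcon
  rcases le_or_gt r c with hcr | hcr
  · -- case r ≤ c : the r×r matrix on columns t..t+r-1 is literally a minor
    have ht : t ≤ k := by omega
    set rows : Fin (min c r) → Fin r := fun i => ⟨i.1, by have := i.2; omega⟩ with hrows
    set cols : Fin (min c r) → Fin c := fun i => ⟨i.1, by have := i.2; omega⟩ with hcols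
    have hdvd := hmin rows cols
    set S := Δ.submatrix rows cols with hS
    set e : Fin r ≃ Fin (min c r) := finCongr (min_eq_right hcr).symm with he
    have hSA : S.submatrix e e = Matrix.of fun i j : Fin r =>
        (if (i : ℕ) ≤ t + (j : ℕ) then ((k.choose (t + (j : ℕ) - (i : ℕ)) : ℕ) : ℤ) else 0) := by
      ext i j
      show Δ (rows (e i)) (cols (e j)) = _
      rw [hΔ]
      simp only [Qtilde, hrows, hcols, Matrix.of_apply, he, finCongr_apply, Fin.coe_cast]
    have hdet2 : (S.submatrix e e).det = S.det := Matrix.det_submatrix_equiv_self e S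
    have : (p : ℤ) ∣ Matrix.det (Matrix.of fun i j : Fin r =>
        (if (i : ℕ) ≤ t + (j : ℕ) then ((k.choose (t + (j : ℕ) - (i : ℕ)) : ℕ) : ℤ) else 0)) := by
      rw [← hSA, hdet2]; exact hdvd
    exact aux_not_dvd_det r k t p hp ht hr H this
  · rcases le_or_gt (t + c) r with htc2 | htc2
    · -- case t + c ≤ r : there is a unimodular (upper triangular) minor
      set rows : Fin (min c r) → Fin r := fun i => ⟨t + i.1, by have := i.2; omega⟩ with hrows
      set cols : Fin (min c r) → Fin c := fun i => ⟨i.1, by have := i.2; omega⟩ with hcols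
      have hdvd := hmin rows cols
      set S := Δ.submatrix rows cols with hS
      have hent : ∀ i j : Fin (min c r), S i j =
          (if t + (i : ℕ) ≤ t + (j : ℕ) then ((k.choose (t + (j : ℕ) - (t + (i : ℕ))) : ℕ) : ℤ) else 0) := by
        intro i j
        show Δ (rows i) (cols j) = _
        rw [hΔ]
        simp only [Qtilde, hrows, hcols]
      have htri : S.BlockTriangular id := by
        intro i j hij
        rw [hent i j, if_neg]
        have : (j : ℕ) < (i : ℕ) := hij
        omega
      have hdet1 : S.det = 1 := by
        rw [Matrix.det_of_upperTriangular htri]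
        refine Finset.prod_eq_one (fun i _ => ?_)
        rw [hent i i, if_pos le_rfl]
        simp
      rw [hdet1] at hdvd
      have := Int.le_of_dvd one_pos hdvd
      have := hp.two_le
      omega
    · -- main case : r < t + c, use invertibility of Aw mod p, w = t + c - r
      set w := t + c - r with hwdef
      have hw : w ≤ k := by omega
      haveI := Fact.mk hp
      set K := ZMod p
      set φ := Int.castRingHom K with hφ
      set Aw : Matrix (Fin r) (Fin r) ℤ := Matrix.of (fun i j : Fin r =>
        (if (i : ℕ) ≤ w + (j : ℕ) then ((k.choose (w + (j : ℕ) - (i : ℕ)) : ℕ) : ℤ) else 0)) with hAwdef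
      have hAw : ¬ (p : ℤ) ∣ Aw.det := aux_not_dvd_det r k w p hp hw hr H
      set AwK : Matrix (Fin r) (Fin r) K := Aw.map φ with hAwK
      have hdetK : AwK.det = φ Aw.det := (RingHom.map_det φ Aw).symm
      have hdetne : AwK.det ≠ 0 := by
        rw [hdetK]
        intro h0
        exact hAw ((ZMod.intCast_zmod_eq_zero_iff_dvd _ p).mp h0)
      have hunit : IsUnit AwK.det := isUnit_iff_ne_zero.2 hdetne
      have hinv : AwK⁻¹ * AwK = 1 := Matrix.nonsing_inv_mul _ hunit
      set ΔK : Matrix (Fin r) (Fin c) K := Δ.map φ with hΔK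
      set g : Fin c → Fin r := fun j => ⟨j.1 + (r - c), by have := j.2; omega⟩ with hg
      have h1 : ∀ (i : Fin r) (j : Fin c), AwK i (g j) = ΔK i j := by
        intro i j
        have hval : w + ((g j : Fin r) : ℕ) = t + (j : ℕ) := by
          simp only [hg]
          omega
        show φ (Aw i (g j)) = φ (Δ i j)
        congr 1
        rw [hΔ]
        simp only [hAwdef, Matrix.of_apply, Qtilde, hval]
      set B : Matrix (Fin c) (Fin r) K := Matrix.of (fun (i : Fin c) (l : Fin r) => AwK⁻¹ (g i) l) with hBdef
      have hginj : Function.Injective g := by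
        intro a b hab
        have : (a : ℕ) + (r - c) = (b : ℕ) + (r - c) := congrArg (fun x : Fin r => (x : ℕ)) hab
        exact Fin.ext (by omega)
      have hB : B * ΔK = 1 := by
        ext i j
        rw [Matrix.mul_apply]
        have hterm : ∀ l : Fin r, B i l * ΔK l j = AwK⁻¹ (g i) l * AwK l (g j) := by
          intro l
          rw [← h1 l j]
          rfl
        rw [Finset.sum_congr rfl (fun l _ => hterm l)]
        have hmm : (AwK⁻¹ * AwK) (g i) (g j) = (1 : Matrix (Fin r) (Fin r) K) (g i) (g j) := by
          rw [hinv]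
        rw [Matrix.mul_apply] at hmm
        rw [hmm, Matrix.one_apply, Matrix.one_apply]
        by_cases hij : i = j
        · rw [if_pos hij, if_pos (congrArg g hij)]
        · rw [if_neg hij, if_neg (fun hgij => hij (hginj hgij))]
      have hone : (B * ΔK).det = 1 := by rw [hB, Matrix.det_one]
      rw [aux_det_mul_expand] at hone
      have hzero : ∀ f : Fin c → Fin r, (ΔK.submatrix f id).det = 0 := by
        intro f
        have hsub : ΔK.submatrix f id = (Δ.submatrix f id).map φ := rfl
        rw [hsub, ← RingHom.mapMatrix_apply, ← RingHom.map_det]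
        set e : Fin c ≃ Fin (min c r) := finCongr (min_eq_left hcr.le).symm with he
        have hdvd := hmin (fun i => f (e.symm i)) (fun i => e.symm i)
        have hrel : (Δ.submatrix f id).det
            = (Δ.submatrix (fun i => f (e.symm i)) (fun i => e.symm i)).det := by
          rw [show Δ.submatrix (fun i => f (e.symm i)) (fun i => e.symm i)
              = (Δ.submatrix f id).submatrix e.symm e.symm from rfl]
          rw [Matrix.det_submatrix_equiv_self]
        rw [hrel]
        exact (ZMod.intCast_zmod_eq_zero_iff_dvd _ p).mpr hdvd
      rw [Finset.sum_congr rfl (fun f _ => by rw [hzero f, mul_zero])] at hone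
      rw [Finset.sum_const, smul_zero] at hone
      exact one_ne_zero hone.symm
end

section
/- Let r, k ≥ 1, i ∈ {0,...,k}, and let Ω be the r × r submatrix of Q̃_{r,r+k} given by Ω[a,b] = C(k, i+b-a) for 1 ≤ a,b ≤ r. Then det Ω ≠ 0; in particular any r consecutive columns of Q̃_{r,r+k} are linearly independent, so Q̃_{r,r+k} has rank r. -/
open Finset Matrix

lemma vand_sum (r : ℕ) (a : Fin r) (y m : ℕ) :
    ∑ s : Fin r, (Nat.choose a s : ℚ) *
      (if (s : ℕ) ≤ m then (y.choose (m - (s : ℕ)) : ℚ) else 0)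
    = (((a : ℕ) + y).choose m : ℚ) := by
  classical
  set g : ℕ → ℚ := fun p => (Nat.choose a p : ℚ) *
      (if p ≤ m then (y.choose (m - p) : ℚ) else 0) with hg
  have h1 : ∑ s : Fin r, (Nat.choose a s : ℚ) *
      (if (s : ℕ) ≤ m then (y.choose (m - (s : ℕ)) : ℚ) else 0)
      = ∑ p ∈ range r, g p := by
    rw [Fin.sum_univ_eq_sum_range (fun p => g p) r]
  have h2 : (((a : ℕ) + y).choose m : ℚ) = ∑ p ∈ range (m + 1), g p := by
    rw [Nat.add_choose_eq, Finset.Nat.sum_antidiagonal_eq_sum_range_succ_mk]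
    push_cast
    refine Finset.sum_congr rfl fun p hp => ?_
    rw [Finset.mem_range, Nat.lt_succ_iff] at hp
    simp [hg, hp]
  have hbig : ∀ (N : ℕ), range r ⊆ range N → range (m+1) ⊆ range N →
      ∑ p ∈ range r, g p = ∑ p ∈ range (m+1), g p := by
    intro N hrN hmN
    rw [Finset.sum_subset hrN, Finset.sum_subset hmN]
    · intro x _ hx
      rw [Finset.mem_range] at hx
      have hxm : ¬ x ≤ m := by omega
      simp [hg, hxm]
    · intro x _ hx
      rw [Finset.mem_range] at hx
      have : (a : ℕ) < x := by have := a.isLt; omega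
      simp [hg, Nat.choose_eq_zero_of_lt this]
  rw [h1, h2, hbig (max r (m+1)) (by simp) (by simp)]

lemma pascal_lower_det (r : ℕ) :
    (Matrix.of fun a s : Fin r => ((a : ℕ).choose s : ℚ)).det = 1 := by
  rw [Matrix.det_of_lowerTriangular]
  · simp
  · intro a s h
    simp only [OrderDual.toDual_lt_toDual] at h
    simp [Nat.choose_eq_zero_of_lt (show (a:ℕ) < s from h)]

lemma consecutive_pascal_det (r y : ℕ) :
    (Matrix.of fun a b : Fin r => ((y + (a : ℕ)).choose b : ℚ)).det = 1 := by
  have hfact : (Matrix.of fun a b : Fin r => ((y + (a : ℕ)).choose b : ℚ))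
      = (Matrix.of fun a s : Fin r => ((a : ℕ).choose s : ℚ)) *
        (Matrix.of fun s b : Fin r =>
          if (s : ℕ) ≤ (b : ℕ) then (y.choose ((b : ℕ) - s) : ℚ) else 0) := by
    ext a b
    rw [Matrix.mul_apply]
    simp only [Matrix.of_apply]
    rw [vand_sum r a y b, Nat.add_comm]
  rw [hfact, Matrix.det_mul, pascal_lower_det]
  rw [Matrix.det_of_upperTriangular]
  · simp
  · intro s b h
    have hv : (b : ℕ) < (s : ℕ) := h
    show (if (s : ℕ) ≤ (b : ℕ) then ((y.choose ((b : ℕ) - (s : ℕ))) : ℚ) else 0) = 0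
    rw [if_neg (by omega)]

lemma omega_det_ne_zero_rat (r k i : ℕ) (hi : i ≤ k) :
    (Matrix.of fun a b : Fin r =>
      if (a : ℕ) ≤ i + (b : ℕ) then (k.choose (i + (b : ℕ) - a) : ℚ) else 0).det ≠ 0 := by
  set Ωq := Matrix.of fun a b : Fin r =>
      if (a : ℕ) ≤ i + (b : ℕ) then (k.choose (i + (b : ℕ) - a) : ℚ) else 0 with hΩq
  set L := Matrix.of fun a s : Fin r => ((a : ℕ).choose s : ℚ) with hL
  set N := Matrix.of fun a b : Fin r => ((k + (a : ℕ)).choose (i + b) : ℚ) with hN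
  have hLΩ : L * Ωq = N := by
    ext a b
    rw [Matrix.mul_apply]
    simp only [hL, hΩq, hN, Matrix.of_apply]
    rw [vand_sum r a k (i + b), Nat.add_comm]
  have hdetN : N.det = Ωq.det := by
    rw [← hLΩ, Matrix.det_mul, pascal_lower_det, one_mul]
  have hfact : N = Matrix.diagonal (fun a : Fin r => ((k + (a : ℕ)).choose i : ℚ)) *
      (Matrix.of fun a b : Fin r => (((k - i) + (a : ℕ)).choose b : ℚ)) *
      Matrix.diagonal (fun b : Fin r => (((i + (b : ℕ)).choose i : ℚ))⁻¹) := by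
    ext a b
    rw [Matrix.mul_assoc, Matrix.diagonal_mul, Matrix.mul_diagonal]
    simp only [hN, Matrix.of_apply]
    have hne : (((i + (b : ℕ)).choose i : ℚ)) ≠ 0 :=
      Nat.cast_ne_zero.2 (Nat.choose_pos (Nat.le_add_right i b)).ne'
    rw [← mul_assoc, eq_mul_inv_iff_mul_eq₀ hne]
    have hnat : (k + (a : ℕ)).choose (i + b) * (i + (b : ℕ)).choose i
        = (k + (a : ℕ)).choose i * ((k - i) + (a : ℕ)).choose b := by
      by_cases hc : i + (b : ℕ) ≤ k + a
      · rw [Nat.choose_mul (Nat.le_add_right i b),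
          show (k + (a : ℕ)) - i = (k - i) + a by omega,
          show i + (b : ℕ) - i = (b : ℕ) by omega]
      · have h1 : (k + (a : ℕ)).choose (i + b) = 0 :=
          Nat.choose_eq_zero_of_lt (by omega)
        have h2 : ((k - i) + (a : ℕ)).choose b = 0 :=
          Nat.choose_eq_zero_of_lt (by omega)
        rw [h1, h2]
        simp
    exact_mod_cast hnat
  have hdetD : N.det = (∏ a : Fin r, ((k + (a : ℕ)).choose i : ℚ)) *
      (∏ b : Fin r, (((i + (b : ℕ)).choose i : ℚ))⁻¹) := by
    rw [hfact, Matrix.det_mul, Matrix.det_mul, consecutive_pascal_det,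
      Matrix.det_diagonal, Matrix.det_diagonal, mul_one]
  rw [← hdetN, hdetD]
  apply mul_ne_zero
  · exact Finset.prod_ne_zero_iff.2 fun a _ =>
      Nat.cast_ne_zero.2 (Nat.choose_pos (by omega)).ne'
  · exact Finset.prod_ne_zero_iff.2 fun b _ =>
      inv_ne_zero (Nat.cast_ne_zero.2 (Nat.choose_pos (Nat.le_add_right i b)).ne')

lemma int_det_ne_zero (r k i : ℕ) (hi : i ≤ k) (Ω : Matrix (Fin r) (Fin r) ℤ)
    (hΩ : ∀ a b : Fin r, Ω a b =
      if (a : ℕ) ≤ i + (b : ℕ) then (Nat.choose k (i + (b : ℕ) - (a : ℕ)) : ℤ) else 0) :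
    Ω.det ≠ 0 := by
  have hmap : Ω.map (Int.cast : ℤ → ℚ) = Matrix.of fun a b : Fin r =>
      if (a : ℕ) ≤ i + (b : ℕ) then (k.choose (i + (b : ℕ) - (a : ℕ)) : ℚ) else 0 := by
    ext a b
    simp only [Matrix.map_apply, hΩ a b, Matrix.of_apply, apply_ite (Int.cast : ℤ → ℚ)]
    push_cast
    rfl
  have h1 := RingHom.map_det (Int.castRingHom ℚ) Ω
  rw [RingHom.mapMatrix_apply, show ((Int.castRingHom ℚ) : ℤ → ℚ) = (Int.cast : ℤ → ℚ) from rfl,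
    hmap] at h1
  intro h0
  rw [h0] at h1
  exact omega_det_ne_zero_rat r k i hi (by simpa using h1.symm)


lemma Qtilde_rank (r k : ℕ) (hk0 : 0 ≤ k) : (Qtilde r k).rank = r := by
  classical
  set Ω₀ : Matrix (Fin r) (Fin r) ℤ := Matrix.of fun a b : Fin r =>
    if (a : ℕ) ≤ (b : ℕ) then (Nat.choose k ((b : ℕ) - (a : ℕ)) : ℤ) else 0 with hΩ₀
  have hdet : Ω₀.det ≠ 0 := by
    apply int_det_ne_zero r k 0 (Nat.zero_le k)
    intro a b
    simp [hΩ₀]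
  -- mulVecLin of Ω₀ is injective
  have hker : ∀ z : Fin r → ℤ, Ω₀ *ᵥ z = 0 → z = 0 := by
    intro z hz
    have h2 : Ω₀.adjugate *ᵥ (Ω₀ *ᵥ z) = Ω₀.det • z := by
      rw [Matrix.mulVec_mulVec, Matrix.adjugate_mul, Matrix.smul_mulVec,
        Matrix.one_mulVec]
    rw [hz, Matrix.mulVec_zero] at h2
    have := h2.symm
    rw [smul_eq_zero] at this
    exact this.resolve_left hdet
  have hinj : Function.Injective Ω₀.mulVecLin := by
    rw [← LinearMap.ker_eq_bot, LinearMap.ker_eq_bot']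
    intro z hz
    exact hker z (by simpa [Matrix.mulVecLin_apply] using hz)
  have hfr : Module.finrank ℤ (LinearMap.range Ω₀.mulVecLin) = r := by
    rw [← (LinearEquiv.ofInjective Ω₀.mulVecLin hinj).finrank_eq]
    simp [Module.finrank_fin_fun]
  have hle : LinearMap.range Ω₀.mulVecLin ≤ LinearMap.range (Qtilde r k).mulVecLin := by
    rintro y ⟨x, rfl⟩
    refine ⟨Fin.append x (0 : Fin k → ℤ), ?_⟩
    simp only [Matrix.mulVecLin_apply]
    funext a
    simp only [Matrix.mulVec, dotProduct]
    rw [Fin.sum_univ_add]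
    have h2 : ∀ c : Fin k, Qtilde r k a (Fin.natAdd r c) *
        (Fin.append x (0 : Fin k → ℤ)) (Fin.natAdd r c) = 0 := by
      intro c; rw [Fin.append_right]; simp
    rw [Finset.sum_congr rfl (fun c _ => h2 c), Finset.sum_const_zero, add_zero]
    refine Finset.sum_congr rfl fun b _ => ?_
    rw [Fin.append_left]
    congr 1
  have hrle : r ≤ (Qtilde r k).rank := by
    rw [Matrix.rank]
    calc r = Module.finrank ℤ (LinearMap.range Ω₀.mulVecLin) := hfr.symm
    _ ≤ Module.finrank ℤ (LinearMap.range (Qtilde r k).mulVecLin) :=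
        Submodule.finrank_mono hle
  have hler : (Qtilde r k).rank ≤ r := by
    simpa using (Qtilde r k).rank_le_card_height
  omega

/-- For `r, k ≥ 1` and `0 ≤ i ≤ k`, the `r × r` submatrix `Ω` of `Q̃_{r,r+k}` with
`(a,b)` entry `C(k, i+b-a)` has nonzero determinant; in particular `Q̃_{r,r+k}`
has rank `r`. -/
theorem Qtilde_square_det_ne_zero (r k i : ℕ) (hr : 1 ≤ r) (hk : 1 ≤ k) (hi : i ≤ k)
    (Ω : Matrix (Fin r) (Fin r) ℤ)
    (hΩ : ∀ a b : Fin r, Ω a b =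
      if (a : ℕ) ≤ i + (b : ℕ) then (Nat.choose k (i + (b : ℕ) - (a : ℕ)) : ℤ) else 0) :
    Ω.det ≠ 0 ∧ (Qtilde r k).rank = r :=
  ⟨int_det_ne_zero r k i hi Ω hΩ, Qtilde_rank r k (Nat.zero_le k)⟩
end

section
/- Let R = ℤ[X,Y,Z,U,V,W]/(XU+YV+ZW), graded with deg X = deg Y = deg Z = 0 and deg U = deg V = deg W = 1, so R₀ = ℤ[X,Y,Z]. For every d ≥ 3, every associated prime of the R₀-module H³_{R₊}(R)_{-d} contains the ideal (X, Y, Z); indeed X^{d-2}, Y^{d-2}, Z^{d-2} each annihilate H³_{R₊}(R)_{-d}. -/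
/-!
Write `e_v` for the basis monomial `U^{-v₀-1} V^{-v₁-1} W^{-v₂-1}` of the degree `-(n+3)`
component, so `v₀ + v₁ + v₂ = n`. Since
`F · e_{v+δᵢ} = Xᵢ e_v + ∑_{j ≠ i, v_j ≥ 1} X_j e_{v+δᵢ-δⱼ}`,
modulo the image of `F` the element `Xᵢ e_v` is a combination of basis vectors with larger
`i`-th exponent. Descending induction on `vᵢ` gives `Xᵢ^{n-vᵢ+1} e_v ∈ im F`, so `Xᵢ^{n+1}`
kills the cokernel, and an associated prime, containing the annihilator, contains `Xᵢ`.
-/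

open MvPolynomial

/-- `R₀ = ℤ[X,Y,Z]`, the degree-zero part of Singh's example
`R = ℤ[X,Y,Z,U,V,W]/(XU+YV+ZW)`; we write `X = X 0`, `Y = X 1`, `Z = X 2`. -/
abbrev R0 : Type := MvPolynomial (Fin 3) ℤ

/-- Index set for the monomial basis `U^{-(v 0 + 1)} V^{-(v 1 + 1)} W^{-(v 2 + 1)}`
of the degree `-(n+3)` component of the inverse polynomial module
`ℤ[X,Y,Z][U⁻,V⁻,W⁻] ≅ H³_{(U,V,W)}(ℤ[X,Y,Z,U,V,W])`. -/
def idx (n : ℕ) : Type := {v : Fin 3 → ℕ // v 0 + v 1 + v 2 = n}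

instance (n : ℕ) : DecidableEq (idx n) := by unfold idx; infer_instance

/-- The degree `-(n+3)` component of the inverse polynomial module, a free
`R₀`-module on `idx n`. -/
abbrev Cmp (n : ℕ) : Type := idx n →₀ R0

/-- Multiplication by `F = XU + YV + ZW` from the degree `-(n+4)` component to the
degree `-(n+3)` component of the inverse polynomial module:
`F · U^α V^β W^γ = X(1-δ_{α,-1})U^{α+1}V^βW^γ + Y(1-δ_{β,-1})U^αV^{β+1}W^γ +
Z(1-δ_{γ,-1})U^αV^βW^{γ+1}`. -/
noncomputable def Fmul (n : ℕ) : Cmp (n + 1) →ₗ[R0] Cmp n :=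
  Finsupp.lsum ℤ fun v => LinearMap.toSpanSingleton R0 (Cmp n)
    (∑ i : Fin 3, if h : 1 ≤ v.1 i then
        (X i : R0) • Finsupp.single
          (⟨fun j => if j = i then v.1 j - 1 else v.1 j, by
              have hv := v.2; have h' := h
              fin_cases i <;> simp_all [Fin.ext_iff] <;> omega⟩ : idx n)
          (1 : R0)
      else 0)

namespace idx

variable {n : ℕ}

lemma apply_le (v : idx n) (i : Fin 3) : v.1 i ≤ n := by
  have hv := v.2; fin_cases i <;> simp <;> omega

def inc (v : idx n) (i : Fin 3) : idx (n + 1) :=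
  ⟨fun j => if j = i then v.1 j + 1 else v.1 j, by
    have hv := v.2; fin_cases i <;> simp_all [Fin.ext_iff] <;> omega⟩

def dec (w : idx (n + 1)) (i : Fin 3) (h : 1 ≤ w.1 i) : idx n :=
  ⟨fun j => if j = i then w.1 j - 1 else w.1 j, by
    have hv := w.2; fin_cases i <;> simp_all [Fin.ext_iff] <;> omega⟩

lemma inc_apply_self (v : idx n) (i : Fin 3) : (v.inc i).1 i = v.1 i + 1 := by
  simp [inc]

lemma dec_inc_self (v : idx n) (i : Fin 3) (h : 1 ≤ (v.inc i).1 i) : (v.inc i).dec i h = v := by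
  refine Subtype.ext (funext fun j => ?_)
  by_cases hj : j = i <;> simp [inc, dec, hj]

lemma dec_inc_apply_of_ne (v : idx n) {i j : Fin 3} (hji : j ≠ i) (h : 1 ≤ (v.inc i).1 j) :
    ((v.inc i).dec j h).1 i = v.1 i + 1 := by
  simp [inc, dec, Ne.symm hji]

end idx

lemma Fmul_single {n : ℕ} (w : idx (n + 1)) :
    Fmul n (Finsupp.single w 1) =
      ∑ i, if h : 1 ≤ w.1 i then (X i : R0) • Finsupp.single (w.dec i h) 1 else 0 := by
  rw [Fmul, Finsupp.lsum_single, LinearMap.toSpanSingleton_apply, one_smul]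
  rfl

lemma Fmul_single_inc {n : ℕ} (v : idx n) (i : Fin 3) :
    Fmul n (Finsupp.single (v.inc i) 1) =
      (X i : R0) • Finsupp.single v 1 + ∑ j ∈ Finset.univ.erase i,
        if h : 1 ≤ (v.inc i).1 j then (X j : R0) • Finsupp.single ((v.inc i).dec j h) 1 else 0 := by
  rw [Fmul_single, ← Finset.add_sum_erase _ _ (Finset.mem_univ i),
    dif_pos (by simp [idx.inc_apply_self]), idx.dec_inc_self]

lemma X_pow_sub_smul_single_mem_range_Fmul {n : ℕ} (i : Fin 3) (v : idx n) :
    (X i : R0) ^ (n - v.1 i + 1) • Finsupp.single v 1 ∈ LinearMap.range (Fmul n) := by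
  induction hk : n - v.1 i using Nat.strong_induction_on generalizing v with
  | _ k ih =>
  have hXv : (X i : R0) • Finsupp.single v 1 = Fmul n (Finsupp.single (v.inc i) 1) -
      ∑ j ∈ Finset.univ.erase i, if h : 1 ≤ (v.inc i).1 j then
        (X j : R0) • Finsupp.single ((v.inc i).dec j h) 1 else 0 := by
    rw [Fmul_single_inc, add_sub_cancel_right]
  rw [pow_succ, mul_smul, hXv, smul_sub, ← map_smul, Finset.smul_sum]
  refine sub_mem (LinearMap.mem_range_self _ _) (Submodule.sum_mem _ fun j hj => ?_)
  split_ifs with h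
  · have hji : j ≠ i := Finset.ne_of_mem_erase hj
    have hexp : n - ((v.inc i).dec j h).1 i + 1 = k := by
      have := ((v.inc i).dec j h).apply_le i
      rw [idx.dec_inc_apply_of_ne v hji] at this ⊢
      omega
    rw [smul_comm, ← hexp]
    exact Submodule.smul_mem _ _ (ih _ (by omega) _ rfl)
  · rw [smul_zero]
    exact zero_mem _

lemma X_pow_smul_single_mem_range_Fmul {n : ℕ} (i : Fin 3) (v : idx n) :
    (X i : R0) ^ (n + 1) • Finsupp.single v 1 ∈ LinearMap.range (Fmul n) := by
  have hexp : (X i : R0) ^ (n + 1) = X i ^ v.1 i * X i ^ (n - v.1 i + 1) := by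
    rw [← pow_add]; congr 1; have := v.apply_le i; omega
  rw [hexp, mul_smul]
  exact Submodule.smul_mem _ _ (X_pow_sub_smul_single_mem_range_Fmul i v)

lemma Finsupp.mem_annihilator_quotient_of_smul_single_mem {ι R : Type*} [CommRing R]
    {N : Submodule R (ι →₀ R)} {r : R} (h : ∀ v, r • Finsupp.single v 1 ∈ N) :
    r ∈ Module.annihilator R ((ι →₀ R) ⧸ N) := by
  rw [Submodule.annihilator_quotient, ← Submodule.top_coe (R := R),
    ← Finsupp.basisSingleOne.span_eq, Submodule.colon_span, Submodule.mem_colon]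
  rintro _ ⟨v, rfl⟩
  simpa using h v

lemma IsAssociatedPrime.mem_of_pow_mem_annihilator {R M : Type*} [CommRing R]
    [AddCommGroup M] [Module R M] {P : Ideal R} (hP : IsAssociatedPrime P M) {r : R} {k : ℕ}
    (hr : r ^ k ∈ Module.annihilator R M) : r ∈ P :=
  hP.isPrime.mem_of_pow_mem k
    (hP.annihilator_le (Submodule.annihilator_top (R := R) (M := M) ▸ hr))

/-- For every `d ≥ 3`, each of `X^{d-2}`, `Y^{d-2}`, `Z^{d-2}` annihilates the
degree `-d` component `H³_{R₊}(R)_{-d}` of Singh's example (realized as the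
cokernel of multiplication by `F = XU+YV+ZW` on inverse polynomials), and hence
every associated prime of this `ℤ[X,Y,Z]`-module contains the ideal `(X,Y,Z)`. -/
theorem singh_ass_primes_contain_XYZ (d : ℕ) (hd : 3 ≤ d) :
    (∀ i : Fin 3, (X i : R0) ^ (d - 2) ∈
        Module.annihilator R0 (Cmp (d - 3) ⧸ LinearMap.range (Fmul (d - 3)))) ∧
    (∀ P : Ideal R0,
        IsAssociatedPrime P (Cmp (d - 3) ⧸ LinearMap.range (Fmul (d - 3))) →
          ∀ i : Fin 3, (X i : R0) ∈ P) := by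
  obtain ⟨n, rfl⟩ : ∃ n, d = n + 3 := ⟨d - 3, by omega⟩
  have hann : ∀ i : Fin 3, (X i : R0) ^ (n + 1) ∈
      Module.annihilator R0 (Cmp n ⧸ LinearMap.range (Fmul n)) := fun i =>
    Finsupp.mem_annihilator_quotient_of_smul_single_mem (X_pow_smul_single_mem_range_Fmul i)
  simp only [show n + 3 - 2 = n + 1 by omega]
  exact ⟨hann, fun P hP i => hP.mem_of_pow_mem_annihilator (hann i)⟩
end
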